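/- Let α be irrational with convergent denominators q_n, satisfying ‖q_nα‖ < 1/q_{n+1}. If q_n·‖q_nα‖ < 1/2 then ‖q_n²α‖ = q_n·‖q_nα‖. If instead q_n·‖q_nα‖ ≥ 1/2, then q_{n+1} < 2q_n, and since q_{n+2} > 2q_n we get q_n·‖q_{n+1}α‖ < 1/2 and hence ‖q_n q_{n+1}α‖ = q_n·‖q_{n+1}α‖. -/

import Mathlib

/-! The convergent estimate `|q_m α - p_m| ≤ 1 / q_{m+1}` with an integer `p_m`, made strict by
irrationality, gives `‖q_m α‖ < 1 / q_{m+1}`; and multiplying `β` by `m` multiplies `‖β‖` by `m`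
as long as `m ‖β‖ < 1/2`, since the nearest integer is then multiplied by `m` too. In the second
case `1/2 ≤ q_n ‖q_n α‖ < q_n / q_{n+1}` forces `q_{n+1} < 2 q_n`, while the recurrence
`q_{n+2} = a q_{n+1} + q_n` with `a ≥ 1` and `q_{n+1} ≥ q_n` gives `q_{n+2} ≥ 2 q_n`, so
`q_n ‖q_{n+1} α‖ < q_n / q_{n+2} ≤ 1/2`. -/

/-- Distance from a real number to the nearest integer. -/
noncomputable def nint (x : ℝ) : ℝ := |x - round x|

theorem nint_natCast_mul {m : ℕ} {β : ℝ} (h : m * nint β < 1 / 2) :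
    nint (m * β) = m * nint β := by
  have hdist : |m * β - ((m * round β : ℤ) : ℝ)| = m * nint β := by
    rw [Int.cast_mul, Int.cast_natCast, ← mul_sub, abs_mul, Nat.abs_cast, nint]
  have hround : round (m * β) = m * round β := by
    rw [round_eq_iff, Set.mem_Ico]
    constructor <;> linarith [abs_lt.1 (hdist ▸ h)]
  rw [nint, hround, hdist]

theorem Irrational.nint_lt_of_le {x : ℝ} {r : ℚ} (hx : Irrational x) (h : nint x ≤ r) :
    nint x < r := by
  refine h.lt_of_ne fun heq => ?_
  rcases abs_choice (x - round x) with hpos | hneg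
  · exact (hx.sub_intCast _).ne_rat r (by rw [← hpos, ← heq, nint])
  · exact (hx.sub_intCast _).neg.ne_rat r (by rw [← hneg, ← heq, nint])

namespace GenContFract

open GenContFract (of)

variable {K : Type*} [Field K] [LinearOrder K] [FloorRing K]

theorem exists_int_eq_contsAux (v : K) (n : ℕ) :
    ∃ a b : ℤ, (of v).contsAux n = ⟨a, b⟩ := by
  induction n using Nat.strong_induction_on with
  | _ n IH =>
  rcases n with _ | _ | n
  · exact ⟨1, 0, by simp [contsAux]⟩
  · exact ⟨⌊v⌋, 1, by simp [contsAux]⟩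
  · obtain ⟨a, b, pred_eq⟩ := IH (n + 1) (by omega)
    rcases s_eq : (of v).s.get? n with _ | gp
    · exact ⟨a, b, (contsAux_stable_of_terminated (n + 1).le_succ s_eq).trans pred_eq⟩
    · obtain ⟨a', b', ppred_eq⟩ := IH n (by omega)
      obtain ⟨a_eq_one, z, b_eq_z⟩ := of_partNum_eq_one_and_exists_int_partDen_eq s_eq
      refine ⟨z * a + a', z * b + b', ?_⟩
      rw [contsAux_recurrence s_eq ppred_eq pred_eq, a_eq_one, b_eq_z]
      simp

theorem exists_int_eq_num (v : K) (n : ℕ) : ∃ p : ℤ, (of v).nums n = p := by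
  obtain ⟨p, _, conts_eq⟩ := exists_int_eq_contsAux v (n + 1)
  exact ⟨p, by rw [num_eq_conts_a, nth_cont_eq_succ_nth_contAux, conts_eq]⟩

variable [IsStrictOrderedRing K] {v : K} {n : ℕ}

theorem one_le_den : 1 ≤ (of v).dens n :=
  zeroth_den_eq_one (g := of v) ▸
    monotone_nat_of_le_succ (f := fun n => (of v).dens n) (fun _ => of_den_mono) n.zero_le

theorem two_mul_den_le_den_add_two (h : ¬(of v).TerminatedAt (n + 1)) :
    2 * (of v).dens n ≤ (of v).dens (n + 2) := by
  obtain ⟨gp, s_eq⟩ := Option.ne_none_iff_exists'.1 h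
  have a_eq_one : gp.a = 1 := of_partNum_eq_one (partNum_eq_s_a s_eq)
  have one_le_b : 1 ≤ gp.b := of_one_le_get?_partDen (partDen_eq_s_b s_eq)
  rw [dens_recurrence s_eq rfl rfl, a_eq_one, one_mul]
  nlinarith [of_den_mono (v := v) (n := n), one_le_den (v := v) (n := n + 1)]

theorem abs_den_mul_sub_num_le (h : ¬(of v).TerminatedAt n) :
    |(of v).dens n * v - (of v).nums n| ≤ 1 / (of v).dens (n + 1) := by
  have hden : 0 < (of v).dens n := one_pos.trans_le one_le_den
  calc |(of v).dens n * v - (of v).nums n|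
      = (of v).dens n * |v - (of v).convs n| := by
        rw [conv_eq_num_div_den, ← abs_of_pos hden, ← abs_mul, abs_of_pos hden, mul_sub,
          mul_div_cancel₀ _ hden.ne']
    _ ≤ (of v).dens n * (1 / ((of v).dens n * (of v).dens (n + 1))) := by
        gcongr; exact abs_sub_convs_le h
    _ = 1 / (of v).dens (n + 1) := by field_simp

end GenContFract

open GenContFract
open GenContFract (of)

theorem Irrational.not_terminatedAt {α : ℝ} (hα : Irrational α) (n : ℕ) :
    ¬(of α).TerminatedAt n := fun h =>
  hα <| by simpa [eq_comm] using (terminates_iff_rat α).1 ⟨n, h⟩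

theorem Irrational.nint_den_mul_lt {α : ℝ} (hα : Irrational α) (n : ℕ) :
    nint ((of α).dens n * α) < 1 / (of α).dens (n + 1) := by
  obtain ⟨p, hp⟩ := exists_int_eq_num α n
  have hle : nint ((of α).dens n * α) ≤ 1 / (of α).dens (n + 1) :=
    (round_le _ p).trans (hp ▸ abs_den_mul_sub_num_le (hα.not_terminatedAt n))
  obtain ⟨d, hd⟩ := exists_rat_eq_nth_den α n
  obtain ⟨d', hd'⟩ := exists_rat_eq_nth_den α (n + 1)
  have hd0 : d ≠ 0 := Rat.cast_ne_zero.1 (hd ▸ (one_pos.trans_le one_le_den).ne')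
  rw [hd, hd'] at hle ⊢
  exact_mod_cast (hα.ratCast_mul hd0).nint_lt_of_le (r := 1 / d') (by exact_mod_cast hle)

/-- for an irrational `α` with convergent denominators `q_n`:
if `q_n‖q_nα‖ < 1/2` then `‖q_n²α‖ = q_n‖q_nα‖`; if instead `q_n‖q_nα‖ ≥ 1/2`
then `q_{n+1} < 2q_n`, `q_n‖q_{n+1}α‖ < 1/2` and `‖q_n q_{n+1}α‖ = q_n‖q_{n+1}α‖`. -/
theorem nearest_integer_multiples
    (α : ℝ) (hα : Irrational α)
    (q : ℕ → ℕ) (hq : ∀ n, (q n : ℝ) = (GenContFract.of α).dens n) (n : ℕ) :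
    ((q n : ℝ) * nint ((q n : ℝ) * α) < 1/2 →
      nint ((q n : ℝ) ^ 2 * α) = (q n : ℝ) * nint ((q n : ℝ) * α)) ∧
    (1/2 ≤ (q n : ℝ) * nint ((q n : ℝ) * α) →
      (q (n+1) : ℝ) < 2 * (q n : ℝ) ∧
      (q n : ℝ) * nint ((q (n+1) : ℝ) * α) < 1/2 ∧
      nint ((q n : ℝ) * (q (n+1) : ℝ) * α) = (q n : ℝ) * nint ((q (n+1) : ℝ) * α)) := by
  have hpos (m : ℕ) : (0 : ℝ) < q m := hq m ▸ one_pos.trans_le one_le_den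
  have hnint (m : ℕ) : nint (q m * α) < 1 / q (m + 1) := by
    simpa only [hq] using hα.nint_den_mul_lt m
  have hgrowth : 2 * (q n : ℝ) ≤ q (n + 2) := by
    simpa only [hq] using two_mul_den_le_den_add_two (hα.not_terminatedAt (n + 1))
  refine ⟨fun hsmall => by rw [sq, mul_assoc, nint_natCast_mul hsmall], fun hlarge => ?_⟩
  have hnext : (q (n + 1) : ℝ) < 2 * q n := by
    have := hlarge.trans_lt (mul_lt_mul_of_pos_left (hnint n) (hpos n))
    rw [mul_one_div, lt_div_iff₀ (hpos (n + 1))] at this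
    linarith
  have hsmall : (q n : ℝ) * nint (q (n + 1) * α) < 1 / 2 :=
    calc (q n : ℝ) * nint (q (n + 1) * α)
        < q n * (1 / q (n + 2)) := mul_lt_mul_of_pos_left (hnint (n + 1)) (hpos n)
      _ ≤ q n * (1 / (2 * q n)) := by gcongr; linarith [hpos n]
      _ = 1 / 2 := by field_simp [(hpos n).ne']
  exact ⟨hnext, hsmall, by rw [mul_assoc, nint_natCast_mul hsmall]⟩
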